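/- Fix T > 0. Define W : [0,T] × ℝ → ℝ by W(t,x) = x for x > 0 and W(t,x) = x·e^{3(T−t)} for x ≤ 0; define h : [0,T] × ℝ → ℝ by h(t,x) = max(x,0); and for (t,x) ∈ [0,T] × ℝ, y, p, P ∈ ℝ, u ∈ [1,2] define ℍ(t,x,y,p,P,u) := (1/2)x²P + x·u·p − |y|. Then W is continuous, W(T,x) = x for all x ∈ ℝ, and W is a viscosity solution of the obstacle HJB equation in the following sense: (subsolution) for every (t,x) ∈ [0,T) × ℝ and every (q,p,P) ∈ D^{1,2,+}_{t+,x} W(t,x), max{ W(t,x) − h(t,x), −q − inf_{u∈[1,2]} ℍ(t,x,W(t,x),p,P,u) } ≤ 0; (supersolution) for every (t,x) ∈ [0,T) × ℝ and every (q,p,P) ∈ D^{1,2,−}_{t+,x} W(t,x), max{ W(t,x) − h(t,x), −q − inf_{u∈[1,2]} ℍ(t,x,W(t,x),p,P,u) } ≥ 0. -/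

import Mathlib

open Filter Topology Set

noncomputable section

/-- The second-order right parabolic superdifferential `D^{1,2,+}_{t+,x} w(t,x)`
for a function of one spatial variable. -/
noncomputable def superdiff1 (T : ℝ) (w : ℝ → ℝ → ℝ) (t x : ℝ) : Set (ℝ × ℝ × ℝ) :=
  {qpP | Filter.limsup
      (fun sy : ℝ × ℝ =>
        (((w sy.1 sy.2 - w t x - qpP.1 * (sy.1 - t) - qpP.2.1 * (sy.2 - x)
            - (1 / 2) * qpP.2.2 * (sy.2 - x) ^ 2)
          / (|sy.1 - t| + |sy.2 - x| ^ 2) : ℝ) : EReal))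
      (𝓝[(Set.Icc t T ×ˢ (Set.univ : Set ℝ)) \ {(t, x)}] (t, x)) ≤ 0}

/-- The second-order right parabolic subdifferential `D^{1,2,-}_{t+,x} w(t,x)`
for a function of one spatial variable. -/
noncomputable def subdiff1 (T : ℝ) (w : ℝ → ℝ → ℝ) (t x : ℝ) : Set (ℝ × ℝ × ℝ) :=
  {qpP | (0 : EReal) ≤ Filter.liminf
      (fun sy : ℝ × ℝ =>
        (((w sy.1 sy.2 - w t x - qpP.1 * (sy.1 - t) - qpP.2.1 * (sy.2 - x)
            - (1 / 2) * qpP.2.2 * (sy.2 - x) ^ 2)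
          / (|sy.1 - t| + |sy.2 - x| ^ 2) : ℝ) : EReal))
      (𝓝[(Set.Icc t T ×ˢ (Set.univ : Set ℝ)) \ {(t, x)}] (t, x))}

/-- The function `W(t,x) = x` for `x > 0` and `W(t,x) = x·e^{3(T-t)}` for `x ≤ 0`. -/
noncomputable def Wex (T t x : ℝ) : ℝ :=
  if 0 < x then x else x * Real.exp (3 * (T - t))

/-- The Hamiltonian `ℍ(t,x,y,p,P,u) = ½x²P + x·u·p - |y|`. -/
noncomputable def HamEx (x y p P u : ℝ) : ℝ :=
  (1 / 2) * x ^ 2 * P + x * u * p - |y|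

namespace StmtAux

/-- The difference quotient appearing in the super/sub-differentials. -/
def Qt (w : ℝ → ℝ → ℝ) (t x q p P : ℝ) (sy : ℝ × ℝ) : ℝ :=
  (w sy.1 sy.2 - w t x - q * (sy.1 - t) - p * (sy.2 - x)
      - (1 / 2) * P * (sy.2 - x) ^ 2)
    / (|sy.1 - t| + |sy.2 - x| ^ 2)

/-- The filter of approach. -/
def Fl (T t x : ℝ) : Filter (ℝ × ℝ) :=
  𝓝[(Set.Icc t T ×ˢ (Set.univ : Set ℝ)) \ {(t, x)}] (t, x)

lemma helper1 {T t x q p P : ℝ} {w : ℝ → ℝ → ℝ}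
    (hmem : (q, p, P) ∈ superdiff1 T w t x) :
    ∀ ε : ℝ, 0 < ε → ∀ᶠ z in Fl T t x, Qt w t x q p P z < ε := by
  intro ε hε
  have hmem' : Filter.limsup (fun sy : ℝ × ℝ => ((Qt w t x q p P sy : ℝ) : EReal))
      (Fl T t x) ≤ 0 := hmem
  have h0 : (0 : EReal) < ((ε : ℝ) : EReal) := by exact_mod_cast hε
  have h2 := Filter.eventually_lt_of_limsup_lt (lt_of_le_of_lt hmem' h0)
  exact h2.mono fun z hz => by exact_mod_cast hz

lemma helper2 {T t x q p P : ℝ} {w : ℝ → ℝ → ℝ}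
    (hmem : (q, p, P) ∈ subdiff1 T w t x) :
    ∀ ε : ℝ, 0 < ε →
      ∀ᶠ z in Fl T t x, Qt (fun s y => -w s y) t x (-q) (-p) (-P) z < ε := by
  intro ε hε
  have hmem' : (0 : EReal) ≤ Filter.liminf
      (fun sy : ℝ × ℝ => ((Qt w t x q p P sy : ℝ) : EReal)) (Fl T t x) := hmem
  have h0 : ((-ε : ℝ) : EReal) < 0 := by exact_mod_cast neg_neg_iff_pos.mpr hε
  have h2 := Filter.eventually_lt_of_lt_liminf (lt_of_lt_of_le h0 hmem')
  refine h2.mono fun z hz => ?_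
  have hz' : -ε < Qt w t x q p P z := by exact_mod_cast hz
  have heq : Qt (fun s y => -w s y) t x (-q) (-p) (-P) z = -Qt w t x q p P z := by
    unfold Qt
    rw [← neg_div]
    congr 1
    ring
  rw [heq]
  linarith

lemma time_curve {T t x : ℝ} (ht : t < T) :
    Tendsto (fun s : ℝ => ((s, x) : ℝ × ℝ)) (𝓝[>] t) (Fl T t x) := by
  rw [Fl, tendsto_nhdsWithin_iff]
  constructor
  · exact ((continuous_id.prodMk continuous_const).tendsto t).mono_left nhdsWithin_le_nhds
  · filter_upwards [self_mem_nhdsWithin,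
      eventually_nhdsWithin_of_eventually_nhds (eventually_lt_nhds ht)] with s hs hsT
    refine ⟨⟨⟨le_of_lt hs, le_of_lt hsT⟩, trivial⟩, fun h => ?_⟩
    exact absurd (Prod.ext_iff.mp h).1 (ne_of_gt hs)

lemma space_curve {T t x : ℝ} (ht : t ≤ T) :
    Tendsto (fun y : ℝ => ((t, y) : ℝ × ℝ)) (𝓝[≠] x) (Fl T t x) := by
  rw [Fl, tendsto_nhdsWithin_iff]
  constructor
  · exact ((continuous_const.prodMk continuous_id).tendsto x).mono_left nhdsWithin_le_nhds
  · filter_upwards [self_mem_nhdsWithin] with y hy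
    refine ⟨⟨⟨le_refl t, ht⟩, trivial⟩, fun h => ?_⟩
    exact hy ((Prod.ext_iff.mp h).2)

lemma space_curve_right {T t x : ℝ} (ht : t ≤ T) :
    Tendsto (fun y : ℝ => ((t, y) : ℝ × ℝ)) (𝓝[>] x) (Fl T t x) :=
  (space_curve ht).mono_left (nhdsWithin_mono x fun y hy => ne_of_gt hy)

lemma space_curve_left {T t x : ℝ} (ht : t ≤ T) :
    Tendsto (fun y : ℝ => ((t, y) : ℝ × ℝ)) (𝓝[<] x) (Fl T t x) :=
  (space_curve ht).mono_left (nhdsWithin_mono x fun y hy => ne_of_lt hy)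

/-- Temporal extraction: the right time-derivative bounds `q` from below. -/
lemma E1 {T t x q p P D : ℝ} {w : ℝ → ℝ → ℝ} (ht : t < T)
    (hev : ∀ ε : ℝ, 0 < ε → ∀ᶠ z in Fl T t x, Qt w t x q p P z < ε)
    (hd : Tendsto (fun s => (w s x - w t x) / (s - t)) (𝓝[>] t) (𝓝 D)) :
    D ≤ q := by
  have key : ∀ ε : ℝ, 0 < ε → D - q ≤ 0 + ε := by
    intro ε hε
    have h1 := (time_curve (x := x) ht).eventually (hev ε hε)
    have h2 : ∀ᶠ s in 𝓝[>] t, (w s x - w t x) / (s - t) - q ≤ ε := by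
      filter_upwards [h1, self_mem_nhdsWithin] with s hs hst
      have hst' : (0 : ℝ) < s - t := sub_pos.mpr hst
      have hQ : Qt w t x q p P (s, x) = (w s x - w t x) / (s - t) - q := by
        simp only [Qt, sub_self, abs_zero, mul_zero, sub_zero, ne_eq,
          OfNat.ofNat_ne_zero, not_false_eq_true, zero_pow, add_zero]
        rw [abs_of_pos hst', sub_div, mul_div_assoc, div_self hst'.ne', mul_one]
      rw [hQ] at hs
      linarith
    have := le_of_tendsto (hd.sub_const q) h2
    linarith
  have := le_of_forall_pos_le_add key
  linarith

/-- Spatial extraction from the right: `c ≤ p`. -/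
lemma E2 {T t x q p P c : ℝ} {w : ℝ → ℝ → ℝ} (ht : t ≤ T)
    (hev : ∀ ε : ℝ, 0 < ε → ∀ᶠ z in Fl T t x, Qt w t x q p P z < ε)
    (hloc : ∀ᶠ y in 𝓝[>] x, w t y = c * y) (hwx : w t x = c * x) :
    c ≤ p := by
  have h1 := (space_curve_right (t := t) ht).eventually (hev 1 one_pos)
  have h2 : ∀ᶠ y in 𝓝[>] x, c - p ≤ (y - x) * (1 + (1 / 2) * P) := by
    filter_upwards [h1, hloc, self_mem_nhdsWithin] with y hq hw hy
    have hd : (0 : ℝ) < y - x := sub_pos.mpr hy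
    have hQ : Qt w t x q p P (t, y)
        = ((c - p) * (y - x) - (1 / 2) * P * (y - x) ^ 2) / (y - x) ^ 2 := by
      simp only [Qt, sub_self, abs_zero, mul_zero, sub_zero, zero_add, sq_abs, hw, hwx]
      ring_nf
    rw [hQ] at hq
    have h3 : (c - p) * (y - x) - (1 / 2) * P * (y - x) ^ 2 < (y - x) ^ 2 := by
      have := (div_lt_one (by positivity : (0 : ℝ) < (y - x) ^ 2)).mp hq
      linarith
    nlinarith
  have htend : Tendsto (fun y : ℝ => (y - x) * (1 + (1 / 2) * P)) (𝓝[>] x) (𝓝 0) := by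
    have hc : Continuous (fun y : ℝ => (y - x) * (1 + (1 / 2) * P)) := by fun_prop
    have h := hc.tendsto x
    simp only [sub_self, zero_mul] at h
    exact h.mono_left nhdsWithin_le_nhds
  have := ge_of_tendsto htend h2
  linarith

/-- Spatial extraction from the left: `p ≤ c`. -/
lemma E3 {T t x q p P c : ℝ} {w : ℝ → ℝ → ℝ} (ht : t ≤ T)
    (hev : ∀ ε : ℝ, 0 < ε → ∀ᶠ z in Fl T t x, Qt w t x q p P z < ε)
    (hloc : ∀ᶠ y in 𝓝[<] x, w t y = c * y) (hwx : w t x = c * x) :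
    p ≤ c := by
  have h1 := (space_curve_left (t := t) ht).eventually (hev 1 one_pos)
  have h2 : ∀ᶠ y in 𝓝[<] x, (y - x) * (1 + (1 / 2) * P) ≤ c - p := by
    filter_upwards [h1, hloc, self_mem_nhdsWithin] with y hq hw hy
    have hd : y - x < 0 := sub_neg.mpr hy
    have hQ : Qt w t x q p P (t, y)
        = ((c - p) * (y - x) - (1 / 2) * P * (y - x) ^ 2) / (y - x) ^ 2 := by
      simp only [Qt, sub_self, abs_zero, mul_zero, sub_zero, zero_add, sq_abs, hw, hwx]
      ring_nf
    rw [hQ] at hq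
    have hd2 : (0 : ℝ) < (y - x) ^ 2 := by rw [sq]; exact mul_pos_of_neg_of_neg hd hd
    have h3 : (c - p) * (y - x) - (1 / 2) * P * (y - x) ^ 2 < (y - x) ^ 2 := by
      have := (div_lt_one hd2).mp hq
      linarith
    have h5 : (0 : ℝ) < -(y - x) := by linarith
    nlinarith
  have htend : Tendsto (fun y : ℝ => (y - x) * (1 + (1 / 2) * P)) (𝓝[<] x) (𝓝 0) := by
    have hc : Continuous (fun y : ℝ => (y - x) * (1 + (1 / 2) * P)) := by fun_prop
    have h := hc.tendsto x
    simp only [sub_self, zero_mul] at h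
    exact h.mono_left nhdsWithin_le_nhds
  have := le_of_tendsto htend h2
  linarith

/-- Second-order extraction: `0 ≤ P` (given `p = c`). -/
lemma E4 {T t x q p P c : ℝ} {w : ℝ → ℝ → ℝ} (ht : t ≤ T)
    (hev : ∀ ε : ℝ, 0 < ε → ∀ᶠ z in Fl T t x, Qt w t x q p P z < ε)
    (hloc : ∀ᶠ y in 𝓝[>] x, w t y = c * y) (hwx : w t x = c * x) (hp : p = c) :
    0 ≤ P := by
  have key : ∀ ε : ℝ, 0 < ε → -(1 / 2) * P < ε := by
    intro ε hε
    have h1 := (space_curve_right (t := t) ht).eventually (hev ε hε)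
    obtain ⟨y, hq, hw, hy⟩ := (h1.and (hloc.and self_mem_nhdsWithin)).exists
    have hd : (0 : ℝ) < y - x := sub_pos.mpr hy
    have hQ : Qt w t x q p P (t, y) = -(1 / 2) * P := by
      simp only [Qt, sub_self, abs_zero, mul_zero, sub_zero, zero_add, sq_abs, hw, hwx, hp]
      rw [show c * y - c * x - c * (y - x) - 1 / 2 * P * (y - x) ^ 2
          = (-(1 / 2) * P) * (y - x) ^ 2 by ring]
      rw [mul_div_assoc, div_self (by positivity : ((y - x) ^ 2 : ℝ) ≠ 0), mul_one]
    rw [hQ] at hq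
    exact hq
  by_contra h
  push_neg at h
  have := key (-(1 / 4) * P) (by linarith)
  linarith

lemma Wex_eq (T t x : ℝ) : Wex T t x = max x 0 + min x 0 * Real.exp (3 * (T - t)) := by
  unfold Wex
  split_ifs with h
  · rw [max_eq_left h.le, min_eq_right h.le]; ring
  · push_neg at h
    rw [max_eq_right h, min_eq_left h]; ring

lemma time_slope (T t x : ℝ) :
    Tendsto (fun s => (Wex T s x - Wex T t x) / (s - t)) (𝓝[>] t)
      (𝓝 (-3 * min x 0 * Real.exp (3 * (T - t)))) := by
  have hφ : HasDerivAt (fun s => max x 0 + min x 0 * Real.exp (3 * (T - s)))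
      (-3 * min x 0 * Real.exp (3 * (T - t))) t := by
    have h1 : HasDerivAt (fun s : ℝ => 3 * (T - s)) (-3) t := by
      have := ((hasDerivAt_const t T).sub (hasDerivAt_id t)).const_mul (3 : ℝ)
      simpa using this
    have h2 := h1.exp
    have h3 := (h2.const_mul (min x 0)).const_add (max x 0)
    exact h3.congr_deriv (by ring)
  have h4 := hasDerivAt_iff_tendsto_slope.mp hφ
  have h5 := h4.mono_left (nhdsWithin_mono t (fun s hs => by
    simp only [mem_compl_iff, mem_singleton_iff]
    exact ne_of_gt hs))
  refine h5.congr fun s => ?_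
  rw [slope_def_field, Wex_eq, Wex_eq]

lemma loc_pos {T t x : ℝ} (hx : 0 < x) : ∀ᶠ y in 𝓝[>] x, Wex T t y = 1 * y := by
  filter_upwards [self_mem_nhdsWithin] with y hy
  unfold Wex
  rw [if_pos (lt_trans hx hy), one_mul]

lemma loc_pos_left {T t x : ℝ} (hx : 0 < x) : ∀ᶠ y in 𝓝[<] x, Wex T t y = 1 * y := by
  filter_upwards [eventually_nhdsWithin_of_eventually_nhds (eventually_gt_nhds hx)] with y hy
  unfold Wex
  rw [if_pos hy, one_mul]

lemma loc_neg {T t x : ℝ} (hx : x < 0) :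
    ∀ᶠ y in 𝓝[>] x, Wex T t y = Real.exp (3 * (T - t)) * y := by
  filter_upwards [eventually_nhdsWithin_of_eventually_nhds (eventually_lt_nhds hx)] with y hy
  unfold Wex
  rw [if_neg (not_lt.mpr hy.le), mul_comm]

lemma loc_neg_left {T t x : ℝ} (hx : x < 0) :
    ∀ᶠ y in 𝓝[<] x, Wex T t y = Real.exp (3 * (T - t)) * y := by
  filter_upwards [self_mem_nhdsWithin] with y hy
  unfold Wex
  rw [if_neg (not_lt.mpr (le_of_lt (lt_trans hy hx))), mul_comm]

lemma Ham_nonempty (x y p P : ℝ) :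
    ((fun u : ℝ => HamEx x y p P u) '' Set.Icc 1 2).Nonempty :=
  ⟨_, Set.mem_image_of_mem _ (by norm_num : (1 : ℝ) ∈ Set.Icc (1 : ℝ) 2)⟩

lemma Ham_bddBelow (x y p P : ℝ) :
    BddBelow ((fun u : ℝ => HamEx x y p P u) '' Set.Icc 1 2) := by
  refine ⟨(1 / 2) * x ^ 2 * P - 2 * (|x| * |p|) - |y|, ?_⟩
  rintro b ⟨u, hu, rfl⟩
  unfold HamEx
  have h1 : |x * u * p| ≤ 2 * (|x| * |p|) := by
    rw [abs_mul, abs_mul]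
    have hu2 : |u| ≤ 2 := abs_le.mpr ⟨by linarith [hu.1], hu.2⟩
    have hx0 := abs_nonneg x
    have hp0 := abs_nonneg p
    have hu0 := abs_nonneg u
    nlinarith [mul_le_mul_of_nonneg_left hu2 (mul_nonneg hx0 hp0)]
  have h2 := neg_abs_le (x * u * p)
  linarith

end StmtAux

open StmtAux

theorem stmt10 (T : ℝ) (hT : 0 < T) :
    -- W is continuous
    Continuous (fun q : ℝ × ℝ => Wex T q.1 q.2) ∧
    -- terminal condition W(T,x) = x
    (∀ x : ℝ, Wex T T x = x) ∧
    -- viscosity subsolution property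
    (∀ t ∈ Set.Ico 0 T, ∀ x : ℝ, ∀ q p P : ℝ,
      (q, p, P) ∈ superdiff1 T (Wex T) t x →
      max (Wex T t x - max x 0)
        (-q - sInf ((fun u : ℝ => HamEx x (Wex T t x) p P u) '' Set.Icc 1 2)) ≤ 0) ∧
    -- viscosity supersolution property
    (∀ t ∈ Set.Ico 0 T, ∀ x : ℝ, ∀ q p P : ℝ,
      (q, p, P) ∈ subdiff1 T (Wex T) t x →
      max (Wex T t x - max x 0)
        (-q - sInf ((fun u : ℝ => HamEx x (Wex T t x) p P u) '' Set.Icc 1 2)) ≥ 0) := by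
  refine ⟨?_, ?_, ?_, ?_⟩
  · -- continuity
    have heq : (fun q : ℝ × ℝ => Wex T q.1 q.2)
        = fun q : ℝ × ℝ => max q.2 0 + min q.2 0 * Real.exp (3 * (T - q.1)) := by
      funext q
      exact Wex_eq T q.1 q.2
    rw [heq]
    fun_prop
  · -- terminal condition
    intro x
    unfold Wex
    split_ifs with h
    · rfl
    · simp
  · -- subsolution
    intro t ht x q p P hmem
    have htT : t < T := ht.2
    have hexp : (1 : ℝ) ≤ Real.exp (3 * (T - t)) :=
      Real.one_le_exp (by nlinarith)
    have hexp0 : (0 : ℝ) < Real.exp (3 * (T - t)) := Real.exp_pos _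
    set e := Real.exp (3 * (T - t)) with he
    have hev := helper1 hmem
    have hq : -3 * min x 0 * e ≤ q := E1 htT hev (time_slope T t x)
    refine max_le ?_ ?_
    · -- W - h ≤ 0
      unfold Wex
      split_ifs with h
      · simp [max_eq_left h.le]
      · push_neg at h
        have : x * e ≤ 0 := mul_nonpos_of_nonpos_of_nonneg h hexp0.le
        have : max x 0 = 0 := max_eq_right h
        simp [this]
        nlinarith [mul_nonpos_of_nonpos_of_nonneg h hexp0.le]
    · -- -q - sInf ≤ 0
      have hbound : ∀ u ∈ Set.Icc (1 : ℝ) 2, -q ≤ HamEx x (Wex T t x) p P u := by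
        intro u hu
        rcases lt_trichotomy x 0 with hx | hx | hx
        · -- x < 0
          have hp1 : e ≤ p := E2 htT.le hev (loc_neg hx)
            (by unfold Wex; rw [if_neg (not_lt.mpr hx.le), mul_comm])
          have hp2 : p ≤ e := E3 htT.le hev (loc_neg_left hx)
            (by unfold Wex; rw [if_neg (not_lt.mpr hx.le), mul_comm])
          have hp : p = e := le_antisymm hp2 hp1
          have hP : 0 ≤ P := E4 htT.le hev (loc_neg hx)
            (by unfold Wex; rw [if_neg (not_lt.mpr hx.le), mul_comm]) hp
          have hW : Wex T t x = x * e := by unfold Wex; rw [if_neg (not_lt.mpr hx.le)]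
          have habs : |Wex T t x| = -(x * e) := by
            rw [hW, abs_of_nonpos (mul_nonpos_of_nonpos_of_nonneg hx.le hexp0.le)]
          have hmin : min x 0 = x := min_eq_left hx.le
          rw [hmin] at hq
          unfold HamEx
          rw [habs, hp]
          have hxe : x * e < 0 := mul_neg_of_neg_of_pos hx hexp0
          have hxu : x * u * e ≥ 2 * (x * e) := by nlinarith [hu.1, hu.2]
          nlinarith [sq_nonneg x]
        · -- x = 0
          subst hx
          have hmin : min (0 : ℝ) 0 = 0 := min_self 0
          rw [hmin] at hq
          unfold HamEx Wex
          simp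
          linarith
        · -- 0 < x
          have hp1 : (1 : ℝ) ≤ p := E2 htT.le hev (loc_pos hx)
            (by unfold Wex; rw [if_pos hx, one_mul])
          have hp2 : p ≤ 1 := E3 htT.le hev (loc_pos_left hx)
            (by unfold Wex; rw [if_pos hx, one_mul])
          have hp : p = 1 := le_antisymm hp2 hp1
          have hP : 0 ≤ P := E4 htT.le hev (loc_pos hx)
            (by unfold Wex; rw [if_pos hx, one_mul]) hp
          have hW : Wex T t x = x := by unfold Wex; rw [if_pos hx]
          have hmin : min x 0 = 0 := min_eq_right hx.le
          rw [hmin] at hq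
          unfold HamEx
          rw [hW, hp, abs_of_pos hx]
          have : x * u * 1 ≥ x := by nlinarith [hu.1]
          nlinarith [sq_nonneg x]
      have hinf : -q ≤ sInf ((fun u : ℝ => HamEx x (Wex T t x) p P u) '' Set.Icc 1 2) := by
        apply le_csInf (Ham_nonempty x (Wex T t x) p P)
        rintro b ⟨u, hu, rfl⟩
        exact hbound u hu
      linarith
  · -- supersolution
    intro t ht x q p P hmem
    have htT : t < T := ht.2
    have hexp0 : (0 : ℝ) < Real.exp (3 * (T - t)) := Real.exp_pos _
    set e := Real.exp (3 * (T - t)) with he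
    rcases le_or_gt 0 x with hx | hx
    · -- x ≥ 0 : W = h
      have hW : Wex T t x - max x 0 = 0 := by
        unfold Wex
        split_ifs with h
        · rw [max_eq_left h.le]; ring
        · push_neg at h
          have hx0 : x = 0 := le_antisymm h hx
          simp [hx0]
      rw [ge_iff_le, le_max_iff]
      left
      rw [hW]
    · -- x < 0
      have hev := helper2 hmem
      have hslope : Tendsto (fun s => ((fun s y => -Wex T s y) s x - (fun s y => -Wex T s y) t x)
          / (s - t)) (𝓝[>] t) (𝓝 (-(-3 * min x 0 * e))) := by
        have := (time_slope T t x).neg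
        refine this.congr fun s => ?_
        simp only
        ring
      have hq' : -(-3 * min x 0 * e) ≤ -q := E1 htT hev hslope
      have hmin : min x 0 = x := min_eq_left hx.le
      rw [hmin] at hq'
      have hq : q ≤ -3 * x * e := by linarith
      have hwx' : (fun s y => -Wex T s y) t x = (-e) * x := by
        simp only [Wex]
        rw [if_neg (not_lt.mpr hx.le)]
        ring
      have hloc' : ∀ᶠ y in 𝓝[>] x, (fun s y => -Wex T s y) t y = (-e) * y := by
        filter_upwards [loc_neg (T := T) (t := t) hx] with y hy
        simp only [hy]
        ring
      have hloc'l : ∀ᶠ y in 𝓝[<] x, (fun s y => -Wex T s y) t y = (-e) * y := by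
        filter_upwards [loc_neg_left (T := T) (t := t) hx] with y hy
        simp only [hy]
        ring
      have hp1 : -e ≤ -p := E2 htT.le hev hloc' hwx'
      have hp2 : -p ≤ -e := E3 htT.le hev hloc'l hwx'
      have hp : p = e := by linarith
      have hP' : 0 ≤ -P := E4 htT.le hev hloc' hwx' (by linarith)
      have hP : P ≤ 0 := by linarith
      have hW : Wex T t x = x * e := by unfold Wex; rw [if_neg (not_lt.mpr hx.le)]
      have habs : |Wex T t x| = -(x * e) := by
        rw [hW, abs_of_nonpos (mul_nonpos_of_nonpos_of_nonneg hx.le hexp0.le)]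
      -- sInf ≤ H(2) ≤ -q
      have h2mem : (2 : ℝ) ∈ Set.Icc (1 : ℝ) 2 := by norm_num
      have hinf : sInf ((fun u : ℝ => HamEx x (Wex T t x) p P u) '' Set.Icc 1 2)
          ≤ HamEx x (Wex T t x) p P 2 :=
        csInf_le (Ham_bddBelow x (Wex T t x) p P) (Set.mem_image_of_mem _ h2mem)
      have hH2 : HamEx x (Wex T t x) p P 2 ≤ -q := by
        unfold HamEx
        rw [habs, hp]
        nlinarith [sq_nonneg x]
      rw [ge_iff_le, le_max_iff]
      right
      linarith

end
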